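/- Let λ ∈ (0,1), s ≠ e₁ a unit vector, N ∈ N_s and R ∈ SO(2) with Re₁ = Ne₁. Then γ := λ (Ne₁ · Ne₂) satisfies γ ∈ K_{s,λ} and λN + (1−λ)R = R(I + γ e₁⊗e₂). -/
import Mathlib


open Matrix Set

noncomputable section

set_option maxHeartbeats 1000000

/-- `SO(2)`: real 2×2 special orthogonal matrices. -/
def SO2 (R : Matrix (Fin 2) (Fin 2) ℝ) : Prop := R * Rᵀ = 1 ∧ R.det = 1

/-- Squared Euclidean norm of a vector in ℝ². -/
def sq2 (v : Fin 2 → ℝ) : ℝ := v 0 ^ 2 + v 1 ^ 2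

/-- Perpendicular vector `s^⊥ = (-s₂, s₁)`. -/
def perp (s : Fin 2 → ℝ) : Fin 2 → ℝ := ![-(s 1), s 0]

/-- The rank-one matrix `e₁ ⊗ e₂`. -/
def E12 : Matrix (Fin 2) (Fin 2) ℝ := vecMulVec ![1, 0] ![0, 1]

/-- The constraint set `K_{s,λ}`. -/
def KsLam (s : Fin 2 → ℝ) (lam : ℝ) : Set ℝ :=
  if s = ![0, 1] then {0}
  else if 0 < s 0 * s 1 then Icc (-2 * (s 0 / s 1) * lam) 0
  else Icc 0 (-2 * (s 0 / s 1) * lam)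

/-- for `λ ∈ (0,1)`, a unit vector `s ≠ e₁`, `N ∈ N_s` and
`R ∈ SO(2)` with `Re₁ = Ne₁`, the number `γ = λ(Ne₁ · Ne₂)` lies in `K_{s,λ}`
and `λN + (1−λ)R = R(I + γ e₁⊗e₂)`. -/
theorem stmt11 (lam : ℝ) (hlam : lam ∈ Ioo (0 : ℝ) 1)
    (s : Fin 2 → ℝ) (hs : sq2 s = 1) (hse1 : s ≠ ![1, 0])
    (hcase : s = ![0, 1] ∨ s = ![0, -1] ∨ s 0 * s 1 ≠ 0)
    (N : Matrix (Fin 2) (Fin 2) ℝ) (hNdet : N.det = 1) (hNs : sq2 (N *ᵥ s) ≤ 1)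
    (R : Matrix (Fin 2) (Fin 2) ℝ) (hR : SO2 R)
    (hRe1 : R *ᵥ ![1, 0] = N *ᵥ ![1, 0])
    (γ : ℝ) (hγdef : γ = lam * ((N *ᵥ ![1, 0]) 0 * (N *ᵥ ![0, 1]) 0 +
      (N *ᵥ ![1, 0]) 1 * (N *ᵥ ![0, 1]) 1)) :
    γ ∈ KsLam s lam ∧ lam • N + (1 - lam) • R = R * (1 + γ • E12) := by
  obtain ⟨hl0, hl1⟩ := hlam
  have hdet : N 0 0 * N 1 1 - N 0 1 * N 1 0 = 1 := by
    rw [Matrix.det_fin_two] at hNdet; linarith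
  have hRt : Rᵀ * R = 1 := mul_eq_one_comm.mp hR.1
  have hcol : R 0 0 ^ 2 + R 1 0 ^ 2 = 1 := by
    have h := congrFun (congrFun hRt 0) 0
    simp [Matrix.mul_apply, Fin.sum_univ_two, Matrix.one_apply, Matrix.transpose_apply] at h
    nlinarith [h]
  have hcol01 : R 0 0 * R 0 1 + R 1 0 * R 1 1 = 0 := by
    have h := congrFun (congrFun hRt 0) 1
    simp [Matrix.mul_apply, Fin.sum_univ_two, Matrix.one_apply, Matrix.transpose_apply] at h
    linarith
  have hRdet : R 0 0 * R 1 1 - R 0 1 * R 1 0 = 1 := by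
    have := hR.2; rw [Matrix.det_fin_two] at this; linarith
  have e0 : R 0 0 = N 0 0 := by
    have := congrFun hRe1 0
    simpa [Matrix.mulVec, dotProduct, Fin.sum_univ_two] using this
  have e1 : R 1 0 = N 1 0 := by
    have := congrFun hRe1 1
    simpa [Matrix.mulVec, dotProduct, Fin.sum_univ_two] using this
  have hr01 : R 0 1 = -(N 1 0) := by
    rw [← e1]
    linear_combination -(R 0 1) * hcol + (R 0 0) * hcol01 - (R 1 0) * hRdet
  have hr11 : R 1 1 = N 0 0 := by
    rw [← e0]
    linear_combination -(R 1 1) * hcol + (R 1 0) * hcol01 + (R 0 0) * hRdet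
  have ha : N 0 0 ^ 2 + N 1 0 ^ 2 = 1 := by rw [← e0, ← e1]; exact hcol
  have hγ : γ = lam * (N 0 0 * N 0 1 + N 1 0 * N 1 1) := by
    rw [hγdef]; simp [Matrix.mulVec, dotProduct, Fin.sum_univ_two]
  obtain ⟨t, ht⟩ : ∃ t : ℝ, t = N 0 0 * N 0 1 + N 1 0 * N 1 1 := ⟨_, rfl⟩
  have hγt : γ = lam * t := by rw [hγ, ht]
  have hsx : s 0 ^ 2 + s 1 ^ 2 = 1 := hs
  have hNs' : (N 0 0 * s 0 + N 0 1 * s 1) ^ 2 + (N 1 0 * s 0 + N 1 1 * s 1) ^ 2 ≤ 1 := by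
    simpa [sq2, Matrix.mulVec, dotProduct, Fin.sum_univ_two] using hNs
  have hexp : (N 0 0 * s 0 + N 0 1 * s 1) ^ 2 + (N 1 0 * s 0 + N 1 1 * s 1) ^ 2
      = (s 0 + s 1 * t) ^ 2 + s 1 ^ 2 := by
    rw [ht]
    linear_combination (s 0 ^ 2 - s 1 ^ 2 * (N 0 1 ^ 2 + N 1 1 ^ 2)) * ha
      + s 1 ^ 2 * (N 0 0 * N 1 1 - N 0 1 * N 1 0 + 1) * hdet
  have key : (s 0 + s 1 * t) ^ 2 ≤ s 0 ^ 2 := by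
    rw [hexp] at hNs'; nlinarith [hNs', hsx]
  constructor
  · clear hNs hNs' hexp hRe1 hR hRt hγdef hNdet hs hse1 hcol hcol01 hRdet ha hdet hγ ht
      e0 e1 hr01 hr11
    rcases hcase with h | h | h
    · have v0 : s 0 = 0 := by rw [h]; rfl
      have v1 : s 1 = 1 := by rw [h]; rfl
      rw [v0, v1] at key
      have htz : t = 0 := by nlinarith [key, sq_nonneg t]
      have hγ0 : γ = 0 := by rw [hγt, htz]; ring
      rw [h, hγ0]
      unfold KsLam
      rw [if_pos rfl]
      exact rfl
    · have v0 : s 0 = 0 := by rw [h]; rfl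
      have v1 : s 1 = -1 := by rw [h]; rfl
      rw [v0, v1] at key
      have htz : t = 0 := by nlinarith [key, sq_nonneg t]
      have hγ0 : γ = 0 := by rw [hγt, htz]; ring
      have hne : (![(0:ℝ), -1] : Fin 2 → ℝ) ≠ ![0, 1] := by
        intro hcon
        have := congrFun hcon 1
        norm_num at this
      rw [h, hγ0]
      unfold KsLam
      rw [if_neg hne]
      norm_num
    · have hs0 : s 0 ≠ 0 := fun hc => h (by rw [hc]; ring)
      have hs1 : s 1 ≠ 0 := fun hc => h (by rw [hc]; ring)
      have hne : s ≠ ![0, 1] := by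
        intro hcon; exact hs0 (by rw [hcon]; rfl)
      unfold KsLam
      rw [if_neg hne]
      by_cases hpos : 0 < s 0 * s 1
      · rw [if_pos hpos]
        rcases lt_or_gt_of_ne hs1 with hv | hv
        · have hu : s 0 < 0 := by nlinarith [hpos]
          constructor
          · rw [hγt]
            have h2 : -2 * (s 0 / s 1) ≤ t := by
              rw [show -2 * (s 0 / s 1) = (-2 * s 0) / s 1 by ring, div_le_iff_of_neg hv]
              nlinarith [key, hv, hu, sq_nonneg (s 1 * t), sq_nonneg (s 1 * t + 2 * s 0)]
            have h3 := mul_le_mul_of_nonneg_left h2 hl0.le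
            linarith [h3]
          · rw [hγt]
            have h2 : t ≤ 0 := by nlinarith [key, hv, hu, hpos, sq_nonneg (s 1 * t)]
            exact mul_nonpos_of_nonneg_of_nonpos hl0.le h2
        · have hu : 0 < s 0 := by nlinarith [hpos]
          constructor
          · rw [hγt]
            have h2 : -2 * (s 0 / s 1) ≤ t := by
              rw [show -2 * (s 0 / s 1) = (-2 * s 0) / s 1 by ring, div_le_iff₀ hv]
              nlinarith [key, hv, hu, sq_nonneg (s 1 * t), sq_nonneg (s 1 * t + 2 * s 0)]
            have h3 := mul_le_mul_of_nonneg_left h2 hl0.le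
            linarith [h3]
          · rw [hγt]
            have h2 : t ≤ 0 := by nlinarith [key, hv, hu, hpos, sq_nonneg (s 1 * t)]
            exact mul_nonpos_of_nonneg_of_nonpos hl0.le h2
      · rw [if_neg hpos]
        have hneg : s 0 * s 1 < 0 := lt_of_le_of_ne (not_lt.mp hpos) h
        rcases lt_or_gt_of_ne hs1 with hv | hv
        · have hu : 0 < s 0 := by nlinarith [hneg]
          constructor
          · rw [hγt]
            have h2 : 0 ≤ t := by nlinarith [key, hv, hu, hneg, sq_nonneg (s 1 * t)]
            exact mul_nonneg hl0.le h2
          · rw [hγt]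
            have h2 : t ≤ -2 * (s 0 / s 1) := by
              rw [show -2 * (s 0 / s 1) = (-2 * s 0) / s 1 by ring, le_div_iff_of_neg hv]
              nlinarith [key, hv, hu, sq_nonneg (s 1 * t), sq_nonneg (s 1 * t + 2 * s 0)]
            have h3 := mul_le_mul_of_nonneg_left h2 hl0.le
            linarith [h3]
        · have hu : s 0 < 0 := by nlinarith [hneg]
          constructor
          · rw [hγt]
            have h2 : 0 ≤ t := by nlinarith [key, hv, hu, hneg, sq_nonneg (s 1 * t)]
            exact mul_nonneg hl0.le h2
          · rw [hγt]
            have h2 : t ≤ -2 * (s 0 / s 1) := by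
              rw [show -2 * (s 0 / s 1) = (-2 * s 0) / s 1 by ring, le_div_iff₀ hv]
              nlinarith [key, hv, hu, sq_nonneg (s 1 * t), sq_nonneg (s 1 * t + 2 * s 0)]
            have h3 := mul_le_mul_of_nonneg_left h2 hl0.le
            linarith [h3]
  · clear hNs hNs' hexp hRe1 hR hRt hγdef hNdet hs hse1 hcol hcol01 hRdet hcase key hsx
      hγt ht
    ext i j
    fin_cases i <;> fin_cases j <;>
      simp only [Matrix.add_apply, Matrix.smul_apply, Matrix.mul_apply, Matrix.one_apply,
        E12, Matrix.vecMulVec_apply, Fin.sum_univ_two, smul_eq_mul, Fin.mk_zero, Fin.mk_one,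
        Matrix.cons_val_zero, Matrix.cons_val_one, Matrix.head_cons] <;>
      rw [hγ] <;>
      simp only [e0, e1, hr01, hr11] <;>
      norm_num
    · ring
    · linear_combination (-(lam * (N 0 1))) * ha - (lam * (N 1 0)) * hdet
    · ring
    · linear_combination (-(lam * (N 1 1))) * ha + (lam * (N 0 0)) * hdet
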